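/- arXiv:2209.03411 — 2 statements merged into one kernel-verified Lean document; each statement's English description precedes it below -/
import Mathlib

section
/- Let n ≥ 4. The function A ↦ (det A)^{1/3} (using the real power function) is NOT concave on the convex set of n×n real positive definite symmetric matrices: there exist positive definite symmetric matrices A, B and s, t > 0 with s + t = 1 such that det(s•A + t•B)^{1/3} < s·(det A)^{1/3} + t·(det B)^{1/3}. -/
open Matrix Real

/-- For `n ≥ 4`, the map `A ↦ (det A) ^ (1/3)` (real power) fails to be concave on
the convex set of `n × n` real positive definite symmetric matrices. -/
theorem det_rpow_third_not_concave_of_posDef (n : ℕ) (hn : 4 ≤ n) :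
    ∃ (A B : Matrix (Fin n) (Fin n) ℝ) (s t : ℝ),
      A.PosDef ∧ B.PosDef ∧ 0 < s ∧ 0 < t ∧ s + t = 1 ∧
      (s • A + t • B).det ^ (1 / 3 : ℝ)
        < s * A.det ^ (1 / 3 : ℝ) + t * B.det ^ (1 / 3 : ℝ) := by
  refine ⟨diagonal (fun _ => 1), diagonal (fun _ => 2), 1/2, 1/2,
    Matrix.PosDef.diagonal (fun _ => one_pos),
    Matrix.PosDef.diagonal (fun _ => two_pos), by norm_num, by norm_num, by norm_num, ?_⟩
  have hcomb : ((1:ℝ)/2) • diagonal (fun _ : Fin n => (1:ℝ))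
      + ((1:ℝ)/2) • diagonal (fun _ : Fin n => (2:ℝ))
      = diagonal (fun _ : Fin n => (3/2 : ℝ)) := by
    ext i j
    by_cases h : i = j <;> simp [Matrix.diagonal_apply, h]; ring
  rw [hcomb, Matrix.det_diagonal, Matrix.det_diagonal, Matrix.det_diagonal]
  simp only [Finset.prod_const, Finset.card_univ, Fintype.card_fin]
  rw [one_pow, Real.one_rpow]
  have h32 : ((3/2 : ℝ) ^ n) ^ (1/3 : ℝ) = (3/2 : ℝ) ^ ((n : ℝ) * (1/3)) := by
    rw [← Real.rpow_natCast (3/2 : ℝ) n, ← Real.rpow_mul (by norm_num)]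
  have h2 : ((2 : ℝ) ^ n) ^ (1/3 : ℝ) = (2 : ℝ) ^ ((n : ℝ) * (1/3)) := by
    rw [← Real.rpow_natCast (2 : ℝ) n, ← Real.rpow_mul (by norm_num)]
  rw [h32, h2]
  set p : ℝ := (n : ℝ) * (1/3) with hp
  have hp1 : 1 < p := by
    have : (4 : ℝ) ≤ (n : ℝ) := by exact_mod_cast hn
    rw [hp]; nlinarith
  have hsc := strictConvexOn_rpow hp1
  have key := hsc.2 (Set.mem_Ici.mpr zero_le_one)
    (by norm_num : (2:ℝ) ∈ Set.Ici (0:ℝ)) (by norm_num)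
    (by norm_num : (0:ℝ) < 1/2) (by norm_num : (0:ℝ) < 1/2) (by norm_num)
  simp only [smul_eq_mul, Real.one_rpow] at key
  have : ((1:ℝ)/2 * 1 + 1/2 * 2) = (3/2 : ℝ) := by norm_num
  rw [this] at key
  linarith
end

section
/- Let M be a nonempty compact, connected, Hausdorff topological manifold (a topological space locally homeomorphic to Euclidean space ℝⁿ via an atlas of charts). If f : M → M is a covering map that is homotopic to the identity map of M, then f is injective. -/
/-- Lifting a homotopy from `f` to the identity, starting at the identity, ends at a section. -/
theorem IsCoveringMap.exists_rightInverse_of_homotopic_id {X : Type*} [TopologicalSpace X]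
    {f : C(X, X)} (hf : IsCoveringMap f) (hid : f.Homotopic (ContinuousMap.id X)) :
    ∃ g : X → X, Continuous g ∧ Function.RightInverse g f := by
  obtain ⟨H⟩ := hid
  let lift := hf.liftHomotopy H.toContinuousMap (ContinuousMap.id X) H.apply_zero
  refine ⟨fun x ↦ lift (1, x), by fun_prop, fun x ↦ ?_⟩
  calc f (lift (1, x)) = H (1, x) := congr_fun (hf.liftHomotopy_lifts ..) (1, x)
    _ = x := H.apply_one x

/-- `g ∘ f` and `id` are lifts of `f` through `f` that agree at any point of the range of `g`. -/
theorem IsCoveringMap.leftInverse_of_rightInverse {E X : Type*} [TopologicalSpace E]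
    [TopologicalSpace X] [PreconnectedSpace E] {f : E → X} {g : X → E} (hf : IsCoveringMap f)
    (hg : Continuous g) (hgf : Function.RightInverse g f) : Function.LeftInverse g f := by
  intro e
  have hlift : g ∘ f = id :=
    hf.eq_of_comp_eq (hg.comp hf.continuous) continuous_id
      (funext fun e' ↦ hgf (f e')) (g (f e)) (congrArg g (hgf (f e)))
  exact congr_fun hlift e

theorem coveringMap_homotopic_id_injective_general
    {M : Type*} [TopologicalSpace M] [ConnectedSpace M]
    (f : C(M, M)) (hcov : IsCoveringMap f)
    (hhtpy : f.Homotopic (ContinuousMap.id M)) :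
    Function.Injective f := by
  obtain ⟨g, hg, hgf⟩ := hcov.exists_rightInverse_of_homotopic_id hhtpy
  exact (hcov.leftInverse_of_rightInverse hg hgf).injective

/-- On a nonempty compact connected Hausdorff topological manifold, a covering map
homotopic to the identity is injective. -/
theorem coveringMap_homotopic_id_injective
    {M : Type*} [TopologicalSpace M] [CompactSpace M] [ConnectedSpace M]
    [T2Space M] [Nonempty M] (n : ℕ)
    [ChartedSpace (EuclideanSpace ℝ (Fin n)) M]
    (f : C(M, M)) (hcov : IsCoveringMap f)
    (hhtpy : f.Homotopic (ContinuousMap.id M)) :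
    Function.Injective f :=
  coveringMap_homotopic_id_injective_general f hcov hhtpy
end
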